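/- arXiv:2510.13295 — 6 statements merged into one kernel-verified Lean document; each statement's English description precedes it below -/
import Mathlib

section
/- For every admissible composition (s_1,…,s_r) (i.e. s_1 ≥ 2), the multiple polylogarithm Li_{s_1,…,s_r}(z) tends to the multiple zeta value ζ(s_1,…,s_r) as the real variable z tends to 1 from below. -/
/-!
Dominated convergence: for `0 < z < 1` each term `z^{n_1}/(n_1^{s_1}⋯n_r^{s_r})` of `Li_s(z)` is
bounded by the corresponding term of `ζ(s)`, so it suffices that the series for `ζ(s)` converges.
With `p = 1 + 1/r` and `n_1 > ⋯ > n_r > 0` we have `(n_1⋯n_r)^{1/r} ≤ n_1`, hence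
`∏ n_i^p ≤ n_1 ∏ n_i ≤ ∏ n_i^{s_i}` as `s_1 ≥ 2`, and the sum of `∏ n_i^{-p}` over all tuples is
`(∑ n^{-p})^r < ∞`.
-/

/-- The multiple polylogarithm `Li_{s_1,…,s_r}(z) = Σ_{n_1>…>n_r>0} z^{n_1}/(n_1^{s_1}⋯n_r^{s_r})`,
for a (nonempty) composition `s : Fin (r+1) → ℕ`. -/
noncomputable def Li {r : ℕ} (s : Fin (r + 1) → ℕ) (z : ℝ) : ℝ :=
  ∑' f : {f : Fin (r + 1) → ℕ // StrictAnti f ∧ ∀ i, 0 < f i},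
    z ^ (f.1 0) * ∏ i, (1 : ℝ) / (f.1 i : ℝ) ^ (s i)

/-- The multiple zeta value `ζ(s_1,…,s_r) = Σ_{n_1>…>n_r>0} 1/(n_1^{s_1}⋯n_r^{s_r})`. -/
noncomputable def mzeta {r : ℕ} (s : Fin (r + 1) → ℕ) : ℝ :=
  ∑' f : {f : Fin (r + 1) → ℕ // StrictAnti f ∧ ∀ i, 0 < f i},
    ∏ i, (1 : ℝ) / (f.1 i : ℝ) ^ (s i)

open Finset

theorem Summable.prod_fin_pi {α : Type*} {g : α → ℝ} (hg : Summable g) (hg0 : ∀ a, 0 ≤ g a)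
    (n : ℕ) : Summable fun f : Fin n → α => ∏ i, g (f i) := by
  induction n with
  | zero => exact .of_finite
  | succ n ih =>
    rw [← (Fin.consEquiv fun _ => α).summable_iff]
    convert hg.mul_of_nonneg ih hg0 fun f => prod_nonneg fun i _ => hg0 (f i) using 2
    simp [Fin.prod_univ_succ]

theorem prod_rpow_inv_card_le {ι : Type*} [Fintype ι] {a : ι → ℝ} {i₀ : ι}
    (ha : ∀ i, 0 ≤ a i) (hle : ∀ i, a i ≤ a i₀) :
    (∏ i, a i) ^ ((Fintype.card ι : ℝ)⁻¹) ≤ a i₀ := by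
  have hprod : ∏ i, a i ≤ a i₀ ^ Fintype.card ι := by
    simpa using Finset.prod_le_prod (s := univ) (fun i _ => ha i) fun i _ => hle i
  calc (∏ i, a i) ^ ((Fintype.card ι : ℝ)⁻¹)
      ≤ (a i₀ ^ Fintype.card ι) ^ ((Fintype.card ι : ℝ)⁻¹) := by
        gcongr
        exact prod_nonneg fun i _ => ha i
    _ = a i₀ := Real.pow_rpow_inv_natCast (ha i₀) (@Fintype.card_ne_zero _ _ ⟨i₀⟩)

theorem mul_prod_le_prod_pow {ι : Type*} [Fintype ι] {a : ι → ℝ} {s : ι → ℕ}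
    {i₀ : ι} (ha : ∀ i, 1 ≤ a i) (hs : ∀ i, 0 < s i) (hs₀ : 2 ≤ s i₀) :
    a i₀ * ∏ i, a i ≤ ∏ i, a i ^ s i := by
  classical
  have ha0 : ∀ i, 0 ≤ a i := fun i => zero_le_one.trans (ha i)
  rw [← mul_prod_erase univ a (mem_univ i₀),
    ← mul_prod_erase univ (fun i => a i ^ s i) (mem_univ i₀), ← mul_assoc, ← pow_two]
  exact mul_le_mul (pow_le_pow_right₀ (ha i₀) hs₀)
    (Finset.prod_le_prod (fun i _ => ha0 i) fun i _ => le_self_pow₀ (ha i) (hs i).ne')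
    (prod_nonneg fun i _ => ha0 i) (pow_nonneg (ha0 i₀) _)

theorem prod_rpow_one_add_inv_card_le_prod_pow {ι : Type*} [Fintype ι] {a : ι → ℝ} {s : ι → ℕ}
    {i₀ : ι} (ha : ∀ i, 1 ≤ a i) (hle : ∀ i, a i ≤ a i₀) (hs : ∀ i, 0 < s i) (hs₀ : 2 ≤ s i₀) :
    ∏ i, a i ^ (1 + (Fintype.card ι : ℝ)⁻¹) ≤ ∏ i, a i ^ s i := by
  have ha0 : ∀ i, 0 ≤ a i := fun i => zero_le_one.trans (ha i)
  calc ∏ i, a i ^ (1 + (Fintype.card ι : ℝ)⁻¹)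
      = (∏ i, a i) * (∏ i, a i) ^ (Fintype.card ι : ℝ)⁻¹ := by
        rw [← Real.finsetProd_rpow _ _ fun i _ => ha0 i, ← prod_mul_distrib]
        exact prod_congr rfl fun i _ => by
          rw [Real.rpow_add (zero_lt_one.trans_le (ha i)), Real.rpow_one]
    _ ≤ (∏ i, a i) * a i₀ := by
        gcongr
        · exact prod_nonneg fun i _ => ha0 i
        · exact prod_rpow_inv_card_le ha0 hle
    _ ≤ ∏ i, a i ^ s i := by
        rw [mul_comm]
        exact mul_prod_le_prod_pow ha hs hs₀

theorem summable_mzeta_term {r : ℕ} {s : Fin (r + 1) → ℕ} (hs : ∀ i, 0 < s i) (hs₀ : 2 ≤ s 0) :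
    Summable fun f : {f : Fin (r + 1) → ℕ // StrictAnti f ∧ ∀ i, 0 < f i} =>
      ∏ i, (1 : ℝ) / (f.1 i : ℝ) ^ (s i) := by
  set p : ℝ := 1 + (Fintype.card (Fin (r + 1)) : ℝ)⁻¹
  have hp : 1 < p := lt_add_of_pos_right 1 (by positivity)
  have hg : Summable fun n : ℕ => ((n : ℝ) ^ p)⁻¹ := Real.summable_nat_rpow_inv.mpr hp
  refine ((hg.prod_fin_pi (fun n => by positivity) (r + 1)).subtype _).of_nonneg_of_le
    (fun f => by positivity) ?_
  rintro ⟨f, hanti, hpos⟩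
  have ha : ∀ i, (1 : ℝ) ≤ f i := fun i => by exact_mod_cast hpos i
  have hle : ∀ i, (f i : ℝ) ≤ f 0 := fun i => by exact_mod_cast hanti.antitone (Fin.zero_le i)
  simp only [Function.comp_apply, one_div, prod_inv_distrib]
  exact inv_anti₀ (prod_pos fun i _ => Real.rpow_pos_of_pos (zero_lt_one.trans_le (ha i)) _)
    (prod_rpow_one_add_inv_card_le_prod_pow ha hle hs hs₀)

/-- for every admissible composition `(s_1,…,s_r)` (i.e. `s_1 ≥ 2`),
`Li_{s_1,…,s_r}(z) → ζ(s_1,…,s_r)` as the real variable `z` tends to `1` from below. -/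
theorem tendsto_Li_mzeta (r : ℕ) (s : Fin (r + 1) → ℕ)
    (hs : ∀ i, 0 < s i) (hadm : 2 ≤ s 0) :
    Filter.Tendsto (fun z : ℝ => Li s z) (nhdsWithin 1 (Set.Iio 1)) (nhds (mzeta s)) := by
  refine tendsto_tsum_of_dominated_convergence (summable_mzeta_term hs hadm) (fun f => ?_) ?_
  · simpa using (((continuous_pow (f.1 0)).tendsto' (1 : ℝ) 1 (one_pow _)).mono_left
      nhdsWithin_le_nhds).mul_const (∏ i, (1 : ℝ) / (f.1 i : ℝ) ^ (s i))
  · filter_upwards [Ioo_mem_nhdsLT (zero_lt_one' ℝ)] with z hz f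
    rw [norm_mul, norm_pow, Real.norm_of_nonneg hz.1.le, Real.norm_of_nonneg (by positivity)]
    exact mul_le_of_le_one_left (by positivity) (pow_le_one₀ hz.1.le hz.2.le)
end

section
/- Euler's identity: ζ(2,1) = ζ(3), i.e. Σ_{m>n>0} 1/(m²·n) = Σ_{m≥1} 1/m³. -/
/-!
Both sides are computed through the Tornheim sum `T = ∑_{a,b ≥ 1} 1/(a b (a+b))`. The partial
fraction `1/(a b) = (1/a + 1/b)/(a+b)` splits `T` into two copies of `ζ(2,1)`, reindexed by
`(a, b) ↦ (a+b, a)`. Summing over `b` first instead, `∑_b 1/(b (a+b)) = H_a/a` telescopes, so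
`T = ∑_a H_a/a² = ζ(2,1) + ζ(3)`. Hence `2 ζ(2,1) = ζ(2,1) + ζ(3)`; all sums converge since
`1/(a b (a+b)) ≤ (a b)^{-3/2}`. Indices below start at `0`, so `a + 1` plays the role of `a`.
-/

open Finset Filter Topology

lemma hasSum_sub_nat_add_of_antitone {f : ℕ → ℝ} (hf : Antitone f)
    (hf0 : Tendsto f atTop (𝓝 0)) (k : ℕ) :
    HasSum (fun n ↦ f n - f (n + k)) (∑ i ∈ range k, f i) := by
  rw [hasSum_iff_tendsto_nat_of_nonneg fun n ↦ sub_nonneg.2 (hf (by omega))]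
  have hpartial (N : ℕ) : ∑ n ∈ range N, (f n - f (n + k)) =
      ∑ i ∈ range k, f i - ∑ i ∈ range k, f (N + i) := by
    have h1 := sum_range_add f N k
    have h2 := sum_range_add f k N
    rw [add_comm N k] at h1
    simp only [sum_sub_distrib, add_comm _ k]
    linarith
  simp only [hpartial]
  simpa using tendsto_const_nhds.sub (tendsto_finsetSum (range k) fun i _ ↦
    hf0.comp (tendsto_add_atTop_nat i))

lemma hasSum_natCast_div_mul_harmonic (k : ℕ) :
    HasSum (fun n : ℕ ↦ (k : ℝ) / ((n + 1) * (n + k + 1))) (harmonic k) := by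
  have hf : Antitone fun n : ℕ ↦ 1 / ((n : ℝ) + 1) := fun m n h ↦ by
    dsimp only; gcongr
  have := hasSum_sub_nat_add_of_antitone hf tendsto_one_div_add_atTop_nhds_zero_nat k
  convert this using 1
  · ext n
    push_cast
    field_simp
    ring
  · simp [harmonic]

lemma one_div_mul_mul_add_le_rpow {x y : ℝ} (hx : 0 < x) (hy : 0 < y) :
    1 / (x * y * (x + y)) ≤ x ^ (-(3 / 2 : ℝ)) * y ^ (-(3 / 2 : ℝ)) := by
  have hsqrt : √(x * y) ≤ x + y := Real.sqrt_le_iff.2 ⟨by positivity, by nlinarith⟩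
  rw [← Real.mul_rpow hx.le hy.le, Real.rpow_neg (by positivity), ← one_div,
    show (3 / 2 : ℝ) = 1 + 1 / 2 by norm_num, Real.rpow_add (by positivity), Real.rpow_one,
    ← Real.sqrt_eq_rpow]
  gcongr

lemma summable_one_div_mul_mul_add :
    Summable fun p : ℕ × ℕ ↦ 1 / (((p.1 : ℝ) + 1) * (p.2 + 1) * (p.1 + p.2 + 2)) := by
  have h : Summable fun n : ℕ ↦ ((n : ℝ) + 1) ^ (-(3 / 2 : ℝ)) := by
    simpa using (summable_nat_add_iff 1).2
      (Real.summable_nat_rpow.2 (by norm_num : -(3 / 2 : ℝ) < -1))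
  refine (h.mul_of_nonneg h (fun _ ↦ by positivity) fun _ ↦ by positivity).of_nonneg_of_le
    (fun _ ↦ by positivity) fun p ↦ ?_
  convert one_div_mul_mul_add_le_rpow (x := p.1 + 1) (y := p.2 + 1) (by positivity)
    (by positivity) using 3
  ring

lemma hasSum_one_div_mul_mul_add (a : ℕ) :
    HasSum (fun b : ℕ ↦ 1 / (((a : ℝ) + 1) * (b + 1) * (a + b + 2)))
      (harmonic (a + 1) / ((a : ℝ) + 1) ^ 2) := by
  rw [div_eq_mul_one_div _ (((a : ℝ) + 1) ^ 2), mul_comm]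
  refine ((hasSum_natCast_div_mul_harmonic (a + 1)).mul_left _).congr_fun fun b ↦ ?_
  push_cast
  field_simp
  ring

lemma tsum_one_div_mul_mul_add :
    ∑' p : ℕ × ℕ, 1 / (((p.1 : ℝ) + 1) * (p.2 + 1) * (p.1 + p.2 + 2)) =
      ∑' a : ℕ, harmonic (a + 1) / ((a : ℝ) + 1) ^ 2 := by
  rw [summable_one_div_mul_mul_add.tsum_prod]
  exact tsum_congr fun a ↦ (hasSum_one_div_mul_mul_add a).tsum_eq

lemma summable_harmonic_succ_div_sq :
    Summable fun a : ℕ ↦ (harmonic (a + 1) : ℝ) / ((a : ℝ) + 1) ^ 2 :=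
  summable_one_div_mul_mul_add.prod.congr fun a ↦ (hasSum_one_div_mul_mul_add a).tsum_eq

lemma tsum_harmonic_div_sq_eq_sub :
    ∑' a : ℕ, (harmonic a : ℝ) / ((a : ℝ) + 1) ^ 2 =
      ∑' a : ℕ, (harmonic (a + 1) : ℝ) / ((a : ℝ) + 1) ^ 2 -
        ∑' n : ℕ, 1 / ((n : ℝ) + 1) ^ 3 := by
  have hzeta : Summable fun n : ℕ ↦ 1 / ((n : ℝ) + 1) ^ 3 := by
    simpa using (summable_nat_add_iff 1).2 (Real.summable_one_div_nat_pow.2 (by norm_num : 1 < 3))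
  rw [← summable_harmonic_succ_div_sq.tsum_sub hzeta]
  refine tsum_congr fun a ↦ ?_
  rw [harmonic_succ]
  push_cast
  field_simp
  ring

def natProdEquivLtPos : ℕ × ℕ ≃ {p : ℕ × ℕ // p.2 < p.1 ∧ 0 < p.2} where
  toFun p := ⟨(p.1 + p.2 + 2, p.1 + 1), by omega⟩
  invFun q := (q.1.2 - 1, q.1.1 - q.1.2 - 1)
  left_inv p := by ext <;> simp; omega
  right_inv q := by ext <;> simp <;> omega

lemma summable_one_div_add_sq_mul :
    Summable fun p : ℕ × ℕ ↦ 1 / (((p.1 : ℝ) + p.2 + 2) ^ 2 * (p.1 + 1)) := by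
  refine summable_one_div_mul_mul_add.of_nonneg_of_le (fun _ ↦ by positivity) fun p ↦ ?_
  have hp2 : (p.2 : ℝ) + 1 ≤ p.1 + p.2 + 2 := by linarith [p.1.cast_nonneg (α := ℝ)]
  gcongr 1 / ?_
  nlinarith [mul_le_mul_of_nonneg_left hp2
    (by positivity : (0 : ℝ) ≤ (p.1 + 1) * (p.1 + p.2 + 2))]

lemma tsum_subtype_eq_tsum_one_div_add_sq_mul :
    ∑' p : {p : ℕ × ℕ // p.2 < p.1 ∧ 0 < p.2}, 1 / ((p.1.1 : ℝ) ^ 2 * p.1.2) =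
      ∑' p : ℕ × ℕ, 1 / (((p.1 : ℝ) + p.2 + 2) ^ 2 * (p.1 + 1)) := by
  rw [← natProdEquivLtPos.tsum_eq]
  refine tsum_congr fun p ↦ ?_
  simp [natProdEquivLtPos]

lemma tsum_one_div_mul_mul_add_eq_two_mul :
    ∑' p : ℕ × ℕ, 1 / (((p.1 : ℝ) + 1) * (p.2 + 1) * (p.1 + p.2 + 2)) =
      2 * ∑' p : ℕ × ℕ, 1 / (((p.1 : ℝ) + p.2 + 2) ^ 2 * (p.1 + 1)) := by
  set t : ℕ × ℕ → ℝ := fun p ↦ 1 / (((p.1 : ℝ) + p.2 + 2) ^ 2 * (p.1 + 1))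
  have hsplit (p : ℕ × ℕ) :
      1 / (((p.1 : ℝ) + 1) * (p.2 + 1) * (p.1 + p.2 + 2)) = t p + t p.swap := by
    simp only [t, Prod.fst_swap, Prod.snd_swap]
    field_simp
    ring
  have hswap : ∑' p : ℕ × ℕ, t p.swap = ∑' p, t p := (Equiv.prodComm ℕ ℕ).tsum_eq t
  have ht : Summable t := summable_one_div_add_sq_mul
  rw [tsum_congr hsplit, ht.tsum_add ht.prod_symm, hswap, two_mul]

lemma tsum_indicator_lt_pos_succ (a : ℕ) :
    ∑' n : ℕ, {p : ℕ × ℕ | p.2 < p.1 ∧ 0 < p.2}.indicator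
      (fun p ↦ 1 / ((p.1 : ℝ) ^ 2 * p.2)) (a + 1, n) = harmonic a / ((a : ℝ) + 1) ^ 2 := by
  rw [tsum_eq_sum (s := Icc 1 a) fun n hn ↦ Set.indicator_of_notMem (by simp at hn ⊢; omega) _,
    harmonic_eq_sum_Icc]
  push_cast
  rw [sum_div]
  refine sum_congr rfl fun n hn ↦ ?_
  rw [Set.indicator_of_mem (by simp at hn ⊢; omega)]
  push_cast
  field_simp

lemma tsum_subtype_eq_tsum_harmonic_div_sq :
    ∑' p : {p : ℕ × ℕ // p.2 < p.1 ∧ 0 < p.2}, 1 / ((p.1.1 : ℝ) ^ 2 * p.1.2) =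
      ∑' a : ℕ, (harmonic a : ℝ) / ((a : ℝ) + 1) ^ 2 := by
  set S : Set (ℕ × ℕ) := {p | p.2 < p.1 ∧ 0 < p.2}
  set f : ℕ × ℕ → ℝ := fun p ↦ 1 / ((p.1 : ℝ) ^ 2 * p.2)
  have hS : Summable (S.indicator f) := by
    refine summable_subtype_iff_indicator.1 (natProdEquivLtPos.summable_iff.1 ?_)
    refine summable_one_div_add_sq_mul.congr fun p ↦ ?_
    simp [natProdEquivLtPos, f]
  change ∑' p : S, f p = _
  rw [_root_.tsum_subtype, hS.tsum_prod, hS.prod.tsum_eq_zero_add]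
  have hzero : ∑' n, S.indicator f (0, n) = 0 := by simp [S]
  rw [hzero, zero_add]
  exact tsum_congr tsum_indicator_lt_pos_succ

/-- Euler's identity: `ζ(2,1) = ζ(3)`, i.e.
`Σ_{m>n>0} 1/(m²·n) = Σ_{m≥1} 1/m³`. -/
theorem zeta_two_one_eq_zeta_three :
    (∑' p : {p : ℕ × ℕ // p.2 < p.1 ∧ 0 < p.2},
      (1 : ℝ) / ((p.1.1 : ℝ) ^ 2 * (p.1.2 : ℝ))) =
    ∑' n : ℕ, (1 : ℝ) / ((n : ℝ) + 1) ^ 3 := by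
  have h_tornheim_harmonic := tsum_one_div_mul_mul_add
  have h_tornheim_two_mul := tsum_one_div_mul_mul_add_eq_two_mul
  have h_reindex := tsum_subtype_eq_tsum_one_div_add_sq_mul
  have h_fubini := tsum_subtype_eq_tsum_harmonic_div_sq
  have h_shift := tsum_harmonic_div_sq_eq_sub
  linarith
end

section
/- Euler's reduction formula: for every integer s ≥ 2, ζ(s,1) = (1/2)·( s·ζ(s+1) − Σ_{j=1}^{s−2} ζ(j+1)·ζ(s−j) ). -/
/-- The (single) zeta value `ζ(k) = Σ_{n≥1} 1/n^k`. -/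
noncomputable def zeta (k : ℕ) : ℝ := ∑' n : ℕ, (1 : ℝ) / ((n : ℝ) + 1) ^ k

/-- The double zeta value `ζ(a,b) = Σ_{m>n>0} 1/(m^a·n^b)`. -/
noncomputable def dzeta (a b : ℕ) : ℝ :=
  ∑' p : {p : ℕ × ℕ // p.2 < p.1 ∧ 0 < p.2},
    (1 : ℝ) / ((p.1.1 : ℝ) ^ a * (p.1.2 : ℝ) ^ b)

/-!
Splitting `ℕ × ℕ` along the diagonal gives the stuffle relation
`ζ(a) ζ(b) = ζ(a,b) + ζ(b,a) + ζ(a+b)`. The sum formula `Σ_{a=2}^{s} ζ(a, s+1-a) = ζ(s+1)`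
comes from evaluating Tornheim's sum `W(s-1, 1, 1)`, where
`W(a,b,c) = Σ_{m,n≥1} m^{-a} n^{-b} (m+n)^{-c}`, in two ways. Iterating the partial fraction
recurrence `W(a+1, b+1, c) = W(a, b+1, c+1) + W(a+1, b, c+1)` gives
`Σ_{a=2}^{s} ζ(a, s+1-a) + ζ(s,1)`, while summing over `n` first with the telescoping series
`Σ_n m / (n (m+n)) = H_m` gives `Σ_m H_m / m^s = ζ(s,1) + ζ(s+1)`. Adding the stuffle relations
with `a + b = s + 1`, `a, b ≥ 2`, and eliminating `Σ_{a=2}^{s-1} ζ(a, s+1-a) = ζ(s+1) - ζ(s,1)`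
by the sum formula yields Euler's formula.

All rearrangements are carried out in `ℝ≥0∞`, where they need no summability hypotheses.
-/

open Finset Filter Topology
open scoped ENNReal

theorem hasSum_sub_add_of_antitone {f : ℕ → ℝ} (hf : Antitone f)
    (hf0 : Tendsto f atTop (𝓝 0)) (N : ℕ) :
    HasSum (fun k ↦ f k - f (k + N)) (∑ i ∈ range N, f i) := by
  rw [hasSum_iff_tendsto_nat_of_nonneg fun k ↦ sub_nonneg.2 (hf (Nat.le_add_right k N))]
  have hpartial : ∀ K, ∑ k ∈ range K, (f k - f (k + N))
      = ∑ i ∈ range N, f i - ∑ i ∈ range N, f (K + i) := by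
    intro K
    have hKN := sum_range_add f K N
    have hNK := sum_range_add f N K
    simp only [add_comm N K, add_comm N] at hNK
    rw [sum_sub_distrib]
    linarith
  have htail : Tendsto (fun K ↦ ∑ i ∈ range N, f (K + i)) atTop (𝓝 0) := by
    simpa using tendsto_finsetSum (range N) fun i _ ↦ hf0.comp (tendsto_add_atTop_nat i)
  simpa [hpartial] using htail.const_sub (∑ i ∈ range N, f i)

theorem antitone_one_div_add_one : Antitone fun k : ℕ ↦ 1 / ((k : ℝ) + 1) :=
  fun i j hij ↦ by dsimp only; gcongr

theorem hasSum_natCast_div_mul (N : ℕ) :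
    HasSum (fun k : ℕ ↦ (N : ℝ) / (((k : ℝ) + 1) * ((k : ℝ) + 1 + N)))
      (∑ n ∈ range N, 1 / ((n : ℝ) + 1)) := by
  convert hasSum_sub_add_of_antitone antitone_one_div_add_one
    tendsto_one_div_add_atTop_nhds_zero_nat N using 1
  funext k
  push_cast
  field_simp
  ring

theorem tsum_ofReal_of_hasSum {α : Type*} {f : α → ℝ} {x : ℝ} (hf : ∀ a, 0 ≤ f a)
    (h : HasSum f x) : ∑' a, ENNReal.ofReal (f a) = ENNReal.ofReal x := by
  rw [← ENNReal.ofReal_tsum_of_nonneg hf h.summable, h.tsum_eq]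

theorem toReal_tsum_ofReal {α : Type*} {f : α → ℝ} (hf : ∀ a, 0 ≤ f a) :
    (∑' a, ENNReal.ofReal (f a)).toReal = ∑' a, f a := by
  rw [ENNReal.tsum_toReal_eq fun _ ↦ ENNReal.ofReal_ne_top]
  exact tsum_congr fun a ↦ ENNReal.toReal_ofReal (hf a)

theorem ENNReal.tsum_sum_range_succ_eq_diag_add (F : ℕ → ℕ → ℝ≥0∞) :
    ∑' j, ∑ i ∈ range (j + 1), F i j = ∑' i, F i i + ∑' i, ∑' k, F i (i + k + 1) := by
  have hfin : ∀ j, ∑ i ∈ range (j + 1), F i j = ∑' i, if i ≤ j then F i j else 0 := by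
    intro j
    rw [tsum_eq_sum (s := range (j + 1)) fun i hi ↦ if_neg (by simpa [Nat.lt_succ_iff] using hi)]
    exact sum_congr rfl fun i hi ↦ (if_pos (Nat.lt_succ_iff.1 (mem_range.1 hi))).symm
  have hshift : ∀ i, ∑' j, (if i ≤ j then F i j else 0) = ∑' k, F i (i + k) := by
    intro i
    rw [← (add_right_injective i).tsum_eq fun j hj ↦ ⟨j - i, Nat.add_sub_cancel' (by
      by_contra h
      exact hj (if_neg h))⟩]
    simp
  simp_rw [hfin]
  rw [ENNReal.tsum_comm, ← ENNReal.tsum_add]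
  exact tsum_congr fun i ↦ (hshift i).trans (tsum_eq_zero_add' ENNReal.summable)

theorem ENNReal.tsum_tsum_eq_diag_add (F : ℕ → ℕ → ℝ≥0∞) :
    ∑' i, ∑' j, F i j
      = ∑' i, F i i + ∑' i, ∑' k, F i (i + k + 1) + ∑' j, ∑' k, F (k + j + 1) j := by
  have hsplit : ∀ j, ∑' i, F i j = ∑ i ∈ range (j + 1), F i j + ∑' k, F (k + j + 1) j :=
    fun j ↦ (ENNReal.summable.sum_add_tsum_nat_add' (k := j + 1)).symm
  rw [ENNReal.tsum_comm]
  simp_rw [hsplit]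
  rw [ENNReal.tsum_add, ENNReal.tsum_sum_range_succ_eq_diag_add]

noncomputable def zetaENN (k : ℕ) : ℝ≥0∞ := ∑' n : ℕ, ENNReal.ofReal (1 / ((n : ℝ) + 1) ^ k)

noncomputable def dzetaENN (a b : ℕ) : ℝ≥0∞ :=
  ∑' p : {p : ℕ × ℕ // p.2 < p.1 ∧ 0 < p.2},
    ENNReal.ofReal (1 / ((p.1.1 : ℝ) ^ a * (p.1.2 : ℝ) ^ b))

/-- Tornheim's sum `W(a, b, c)`, indexed by `m = i + 1` and `n = k + 1`. -/
noncomputable def tornheimENN (a b c : ℕ) : ℝ≥0∞ :=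
  ∑' i : ℕ, ∑' k : ℕ,
    ENNReal.ofReal (1 / (((i : ℝ) + 1) ^ a * ((k : ℝ) + 1) ^ b * ((i : ℝ) + k + 2) ^ c))

theorem zeta_eq_toReal_zetaENN (k : ℕ) : zeta k = (zetaENN k).toReal :=
  (toReal_tsum_ofReal fun _ ↦ by positivity).symm

theorem dzeta_eq_toReal_dzetaENN (a b : ℕ) : dzeta a b = (dzetaENN a b).toReal :=
  (toReal_tsum_ofReal fun _ ↦ by positivity).symm

def dzetaIndexEquiv : ℕ × ℕ ≃ {p : ℕ × ℕ // p.2 < p.1 ∧ 0 < p.2} where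
  toFun q := ⟨(q.1 + q.2 + 2, q.1 + 1), by omega⟩
  invFun p := (p.1.2 - 1, p.1.1 - p.1.2 - 1)
  left_inv q := by ext <;> simp; omega
  right_inv := by
    rintro ⟨⟨m, n⟩, hnm, hn⟩
    ext <;> simp <;> omega

theorem dzetaENN_eq_tornheimENN (a b : ℕ) : dzetaENN a b = tornheimENN b 0 a := by
  rw [dzetaENN, ← dzetaIndexEquiv.tsum_eq, ENNReal.tsum_prod', tornheimENN]
  refine tsum_congr fun i ↦ tsum_congr fun k ↦ ?_
  simp only [dzetaIndexEquiv, Equiv.coe_fn_mk]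
  push_cast
  ring_nf

theorem tornheimENN_comm (a b c : ℕ) : tornheimENN a b c = tornheimENN b a c := by
  rw [tornheimENN, ENNReal.tsum_comm]
  refine tsum_congr fun k ↦ tsum_congr fun i ↦ ?_
  ring_nf

theorem tornheimENN_succ_succ (a b c : ℕ) :
    tornheimENN (a + 1) (b + 1) c
      = tornheimENN a (b + 1) (c + 1) + tornheimENN (a + 1) b (c + 1) := by
  simp only [tornheimENN, ← ENNReal.tsum_add]
  refine tsum_congr fun i ↦ tsum_congr fun k ↦ ?_
  rw [← ENNReal.ofReal_add (by positivity) (by positivity)]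
  congr 1
  field_simp
  ring

theorem tornheimENN_succ_one (r c : ℕ) :
    tornheimENN (r + 1) 1 c
      = ∑ a ∈ range (r + 1), tornheimENN (r + 1 - a) 0 (c + a + 1)
        + tornheimENN 0 1 (c + r + 1) := by
  induction r generalizing c with
  | zero => simpa [add_comm] using tornheimENN_succ_succ 0 0 c
  | succ r ih =>
    rw [tornheimENN_succ_succ (r + 1) 0 c, ih, sum_range_succ' _ (r + 1)]
    simp only [Nat.add_sub_add_right, Nat.sub_zero, add_zero]
    ring_nf

theorem hasSum_tornheimENN_succ_one_one_inner (r i : ℕ) :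
    HasSum
      (fun k : ℕ ↦ 1 / (((i : ℝ) + 1) ^ (r + 1) * ((k : ℝ) + 1) ^ 1 * ((i : ℝ) + k + 2) ^ 1))
      (∑ n ∈ range (i + 1), 1 / (((n : ℝ) + 1) * ((i : ℝ) + 1) ^ (r + 2))) := by
  have hterm : ∀ k : ℕ,
      1 / (((i : ℝ) + 1) ^ (r + 1) * ((k : ℝ) + 1) ^ 1 * ((i : ℝ) + k + 2) ^ 1)
        = 1 / ((i : ℝ) + 1) ^ (r + 2)
          * (((i + 1 : ℕ) : ℝ) / (((k : ℝ) + 1) * ((k : ℝ) + 1 + (i + 1 : ℕ)))) := by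
    intro k
    push_cast
    field_simp
    ring
  have hval : ∑ n ∈ range (i + 1), 1 / (((n : ℝ) + 1) * ((i : ℝ) + 1) ^ (r + 2))
      = 1 / ((i : ℝ) + 1) ^ (r + 2) * ∑ n ∈ range (i + 1), 1 / ((n : ℝ) + 1) := by
    rw [mul_sum]
    exact sum_congr rfl fun n _ ↦ by rw [one_div_mul_one_div, mul_comm]
  rw [funext hterm, hval]
  exact (hasSum_natCast_div_mul (i + 1)).mul_left _

theorem tornheimENN_succ_one_one (r : ℕ) :
    tornheimENN (r + 1) 1 1 = dzetaENN (r + 2) 1 + zetaENN (r + 3) := by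
  have hinner : ∀ i : ℕ, ∑' k : ℕ, ENNReal.ofReal
        (1 / (((i : ℝ) + 1) ^ (r + 1) * ((k : ℝ) + 1) ^ 1 * ((i : ℝ) + k + 2) ^ 1))
      = ∑ n ∈ range (i + 1), ENNReal.ofReal (1 / (((n : ℝ) + 1) * ((i : ℝ) + 1) ^ (r + 2))) :=
    fun i ↦ by
      rw [tsum_ofReal_of_hasSum (fun k ↦ by positivity) (hasSum_tornheimENN_succ_one_one_inner r i),
        ENNReal.ofReal_sum_of_nonneg fun n _ ↦ by positivity]
  rw [tornheimENN]
  simp_rw [hinner]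
  rw [ENNReal.tsum_sum_range_succ_eq_diag_add, dzetaENN_eq_tornheimENN, tornheimENN, zetaENN,
    add_comm]
  congr 1
  · refine tsum_congr fun i ↦ tsum_congr fun k ↦ ?_
    push_cast
    ring_nf
  · refine tsum_congr fun i ↦ ?_
    ring_nf

theorem zetaENN_ne_top {k : ℕ} (hk : 2 ≤ k) : zetaENN k ≠ ∞ := by
  have hsum : Summable fun n : ℕ ↦ 1 / ((n : ℝ) + 1) ^ k := by
    simpa using (summable_nat_add_iff 1).2 (Real.summable_one_div_nat_pow.2 hk)
  exact hsum.tsum_ofReal_ne_top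

theorem one_div_pow_mul_pow_le {x y : ℝ} {c d : ℕ} (hx : 1 ≤ x) (hy : 0 < y) (hc : 2 ≤ c)
    (hd : 1 ≤ d) : 1 / (x ^ d * (y + 1) ^ c) ≤ 1 / (x * (y * (y + 1))) := by
  apply one_div_le_one_div_of_le (mul_pos (by linarith) (by positivity))
  have hy2 : y * (y + 1) ≤ (y + 1) ^ c :=
    calc y * (y + 1) ≤ (y + 1) ^ 2 := by nlinarith
      _ ≤ (y + 1) ^ c := pow_le_pow_right₀ (by linarith) hc
  exact mul_le_mul (le_self_pow₀ hx (by omega)) hy2 (by positivity) (pow_nonneg (by linarith) d)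

/-- For `m > n`, `1 / (m^c n^d) ≤ 1 / (n (m - 1) m)`, which telescopes in `m` to `1 / n^2`. -/
theorem dzetaENN_le_zetaENN_two {c d : ℕ} (hc : 2 ≤ c) (hd : 1 ≤ d) :
    dzetaENN c d ≤ zetaENN 2 := by
  rw [dzetaENN_eq_tornheimENN, tornheimENN, zetaENN]
  refine ENNReal.tsum_le_tsum fun i ↦ ?_
  set f : ℕ → ℝ := fun k ↦ 1 / (((k + i : ℕ) : ℝ) + 1) with hf_def
  have hf : Antitone f :=
    antitone_one_div_add_one.comp_monotone fun _ _ h ↦ Nat.add_le_add_right h i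
  have hf0 : Tendsto f atTop (𝓝 0) :=
    tendsto_one_div_add_atTop_nhds_zero_nat.comp (tendsto_add_atTop_nat i)
  have htel := (hasSum_sub_add_of_antitone hf hf0 1).mul_left (1 / ((i : ℝ) + 1))
  have hterm (k : ℕ) : 1 / (((i : ℝ) + 1) ^ d * ((k : ℝ) + 1) ^ 0 * ((i : ℝ) + k + 2) ^ c)
      ≤ 1 / ((i : ℝ) + 1) * (f k - f (k + 1)) := by
    have htelescope : 1 / ((i : ℝ) + 1) * (f k - f (k + 1))
        = 1 / (((i : ℝ) + 1) * (((k : ℝ) + i + 1) * ((k : ℝ) + i + 1 + 1))) := by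
      simp only [hf_def]
      push_cast
      field_simp
      ring
    rw [htelescope, pow_zero, mul_one, show (i : ℝ) + k + 2 = (k : ℝ) + i + 1 + 1 by ring]
    exact one_div_pow_mul_pow_le (by linarith [i.cast_nonneg (α := ℝ)]) (by positivity) hc hd
  calc ∑' k : ℕ, ENNReal.ofReal
          (1 / (((i : ℝ) + 1) ^ d * ((k : ℝ) + 1) ^ 0 * ((i : ℝ) + k + 2) ^ c))
      ≤ ∑' k, ENNReal.ofReal (1 / ((i : ℝ) + 1) * (f k - f (k + 1))) :=
        ENNReal.tsum_le_tsum fun k ↦ ENNReal.ofReal_le_ofReal (hterm k)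
    _ = ENNReal.ofReal (1 / ((i : ℝ) + 1) ^ 2) := by
        rw [tsum_ofReal_of_hasSum
          (fun k ↦ mul_nonneg (by positivity) (sub_nonneg.2 (hf (by omega)))) htel, sum_range_one]
        simp only [hf_def, zero_add, one_div_mul_one_div, sq]

theorem dzetaENN_ne_top {c d : ℕ} (hc : 2 ≤ c) (hd : 1 ≤ d) : dzetaENN c d ≠ ∞ :=
  ne_top_of_le_ne_top (zetaENN_ne_top le_rfl) (dzetaENN_le_zetaENN_two hc hd)

theorem zetaENN_mul_zetaENN (a b : ℕ) :
    zetaENN a * zetaENN b = dzetaENN a b + dzetaENN b a + zetaENN (a + b) := by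
  have hprod : zetaENN a * zetaENN b
      = ∑' i : ℕ, ∑' j : ℕ, ENNReal.ofReal (1 / (((i : ℝ) + 1) ^ a * ((j : ℝ) + 1) ^ b)) := by
    rw [zetaENN, zetaENN, ← ENNReal.tsum_mul_right]
    refine tsum_congr fun i ↦ ?_
    rw [← ENNReal.tsum_mul_left]
    refine tsum_congr fun j ↦ ?_
    rw [← ENNReal.ofReal_mul (by positivity), one_div_mul_one_div]
  rw [hprod, ENNReal.tsum_tsum_eq_diag_add, add_comm (dzetaENN a b),
    add_comm _ (zetaENN (a + b)), ← add_assoc]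
  congr 1
  congr 1
  · exact tsum_congr fun i ↦ by rw [pow_add]
  · rw [dzetaENN_eq_tornheimENN, tornheimENN]
    refine tsum_congr fun i ↦ tsum_congr fun k ↦ ?_
    push_cast
    ring_nf
  · rw [dzetaENN_eq_tornheimENN, tornheimENN]
    refine tsum_congr fun j ↦ tsum_congr fun k ↦ ?_
    push_cast
    ring_nf

theorem sum_dzetaENN_eq_zetaENN (r : ℕ) :
    ∑ a ∈ range (r + 1), dzetaENN (a + 2) (r + 1 - a) = zetaENN (r + 3) := by
  have hpf : tornheimENN (r + 1) 1 1
      = ∑ a ∈ range (r + 1), dzetaENN (a + 2) (r + 1 - a) + dzetaENN (r + 2) 1 := by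
    rw [tornheimENN_succ_one, tornheimENN_comm 0, dzetaENN_eq_tornheimENN (r + 2)]
    simp only [dzetaENN_eq_tornheimENN]
    ring_nf
  rw [← ENNReal.add_left_inj (dzetaENN_ne_top le_add_self le_rfl), ← hpf,
    tornheimENN_succ_one_one, add_comm]

theorem zeta_mul_zeta {a b : ℕ} (ha : 2 ≤ a) (hb : 2 ≤ b) :
    zeta a * zeta b = dzeta a b + dzeta b a + zeta (a + b) := by
  simp only [zeta_eq_toReal_zetaENN, dzeta_eq_toReal_dzetaENN]
  have hab := dzetaENN_ne_top ha (by omega : 1 ≤ b)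
  have hba := dzetaENN_ne_top hb (by omega : 1 ≤ a)
  rw [← ENNReal.toReal_mul, zetaENN_mul_zetaENN,
    ENNReal.toReal_add (ENNReal.add_ne_top.2 ⟨hab, hba⟩) (zetaENN_ne_top (by omega)),
    ENNReal.toReal_add hab hba]

theorem sum_dzeta_eq_zeta (r : ℕ) :
    ∑ a ∈ range (r + 1), dzeta (a + 2) (r + 1 - a) = zeta (r + 3) := by
  simp only [dzeta_eq_toReal_dzetaENN, zeta_eq_toReal_zetaENN]
  rw [← ENNReal.toReal_sum fun a ha ↦ dzetaENN_ne_top le_add_self (by simp at ha; omega),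
    sum_dzetaENN_eq_zetaENN]

/-- Euler's reduction formula: for every integer `s ≥ 2`,
`ζ(s,1) = (1/2)·(s·ζ(s+1) − Σ_{j=1}^{s−2} ζ(j+1)·ζ(s−j))`. -/
theorem euler_reduction (s : ℕ) (hs : 2 ≤ s) :
    dzeta s 1 =
      (1 / 2 : ℝ) * ((s : ℝ) * zeta (s + 1)
        - ∑ j ∈ Finset.Icc 1 (s - 2), zeta (j + 1) * zeta (s - j)) := by
  obtain ⟨r, rfl⟩ : ∃ r, s = r + 2 := ⟨s - 2, by omega⟩
  have hIcc : ∑ j ∈ Icc 1 (r + 2 - 2), zeta (j + 1) * zeta (r + 2 - j)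
      = ∑ a ∈ range r, zeta (a + 2) * zeta (r + 1 - a) := by
    rw [Nat.add_sub_cancel, range_eq_Ico, ← Ico_add_one_right_eq_Icc, ← sum_Ico_add' _ 0 r 1]
    refine sum_congr rfl fun a _ ↦ ?_
    congr 2
    omega
  have hstuffle : ∑ a ∈ range r, zeta (a + 2) * zeta (r + 1 - a)
      = 2 * ∑ a ∈ range r, dzeta (a + 2) (r + 1 - a) + r * zeta (r + 3) := by
    have h : ∀ a ∈ range r, zeta (a + 2) * zeta (r + 1 - a)
        = dzeta (a + 2) (r + 1 - a) + dzeta (r + 1 - a) (a + 2) + zeta (r + 3) := by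
      intro a ha
      have := mem_range.1 ha
      rw [zeta_mul_zeta (by omega) (by omega)]
      congr 2
      omega
    rw [sum_congr rfl h, sum_add_distrib, sum_add_distrib, sum_const, card_range, nsmul_eq_mul,
      two_mul, ← sum_range_reflect (fun a ↦ dzeta (a + 2) (r + 1 - a))]
    congr 2
    refine sum_congr rfl fun a ha ↦ ?_
    have := mem_range.1 ha
    congr 1 <;> omega
  have hsum := sum_dzeta_eq_zeta r
  rw [sum_range_succ, Nat.add_sub_cancel_left] at hsum
  rw [hIcc, hstuffle, show r + 2 + 1 = r + 3 from rfl]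
  push_cast
  linarith
end

section
/- Euler's product (quasi-shuffle) identity for double zeta values: for all integers s_1, s_2 ≥ 2, ζ(s_1)·ζ(s_2) = ζ(s_1,s_2) + ζ(s_2,s_1) + ζ(s_1+s_2). -/
theorem Summable.tsum_eq_tsum_lt_add_tsum_lt_swap_add_tsum_diag {α β : Type*} [AddCommGroup α]
    [UniformSpace α] [IsUniformAddGroup α] [CompleteSpace α] [T2Space α] [LinearOrder β]
    {f : β × β → α} (hf : Summable f) :
    ∑' p, f p = ∑' p : {p : β × β // p.2 < p.1}, f p + ∑' p : {p : β × β // p.2 < p.1}, f p.1.swap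
      + ∑' b, f (b, b) := by
  have hdisj : Disjoint {p : β × β | p.2 < p.1} {p | p.1 < p.2} :=
    Set.disjoint_left.2 fun _ h h' => lt_asymm h h'
  have hdiag : Set.range (fun b : β => (b, b)) = ({p | p.2 < p.1} ∪ {p | p.1 < p.2})ᶜ := by
    ext ⟨a, b⟩
    simp only [Set.mem_range, Prod.mk.injEq, Set.mem_compl_iff, Set.mem_union, Set.mem_ofPred_eq,
      not_or, not_lt, exists_eq_left]
    exact ⟨fun h => h ▸ ⟨le_rfl, le_rfl⟩, fun h => le_antisymm h.1 h.2⟩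
  have hsum := ((hf.subtype _).hasSum.add_disjoint hdisj (hf.subtype _).hasSum).add_isCompl
    (hdiag ▸ isCompl_compl) (hf.subtype _).hasSum
  simp only [Function.comp_apply] at hsum
  rw [hsum.tsum_eq, tsum_range f fun a b h => congrArg Prod.fst h]
  congr 2
  exact (((Equiv.prodComm β β).subtypeEquiv (p := fun p => p.2 < p.1) (q := fun p => p.1 < p.2)
    fun _ => Iff.rfl).tsum_eq fun p => f p.1).symm

theorem summable_one_div_succ_pow {k : ℕ} (hk : 1 < k) :
    Summable fun n : ℕ => 1 / ((n : ℝ) + 1) ^ k := by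
  simpa using (summable_nat_add_iff 1).2 (Real.summable_one_div_nat_pow.2 hk)

theorem hasSum_zeta_mul_zeta {a b : ℕ} (ha : 1 < a) (hb : 1 < b) :
    HasSum (fun p : ℕ × ℕ => 1 / ((p.1 : ℝ) + 1) ^ a * (1 / ((p.2 : ℝ) + 1) ^ b))
      (zeta a * zeta b) := by
  have hfa := summable_norm_iff.2 (summable_one_div_succ_pow ha)
  have hfb := summable_norm_iff.2 (summable_one_div_succ_pow hb)
  rw [zeta, zeta, tsum_mul_tsum_of_summable_norm hfa hfb]
  exact (summable_mul_of_summable_norm hfa hfb).hasSum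

def ltEquivLtPos : {p : ℕ × ℕ // p.2 < p.1} ≃ {p : ℕ × ℕ // p.2 < p.1 ∧ 0 < p.2} where
  toFun p := ⟨(p.1.1 + 1, p.1.2 + 1), Nat.succ_lt_succ p.2, Nat.succ_pos _⟩
  invFun q := ⟨(q.1.1 - 1, q.1.2 - 1), by omega⟩
  left_inv p := by simp
  right_inv := fun ⟨(a, b), h⟩ => by
    simp only [Subtype.mk.injEq, Prod.mk.injEq]
    omega

theorem dzeta_eq_tsum_lt (a b : ℕ) :
    dzeta a b = ∑' p : {p : ℕ × ℕ // p.2 < p.1},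
      1 / ((p.1.1 : ℝ) + 1) ^ a * (1 / ((p.1.2 : ℝ) + 1) ^ b) := by
  rw [dzeta, ← ltEquivLtPos.tsum_eq]
  refine tsum_congr fun p => ?_
  simp only [ltEquivLtPos, Equiv.coe_fn_mk, Nat.cast_succ, one_div_mul_one_div]

/-- Euler's quasi-shuffle identity: for all integers `s₁, s₂ ≥ 2`,
`ζ(s₁)·ζ(s₂) = ζ(s₁,s₂) + ζ(s₂,s₁) + ζ(s₁+s₂)`. -/
theorem euler_quasi_shuffle (s₁ s₂ : ℕ) (h₁ : 2 ≤ s₁) (h₂ : 2 ≤ s₂) :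
    zeta s₁ * zeta s₂ = dzeta s₁ s₂ + dzeta s₂ s₁ + zeta (s₁ + s₂) := by
  have hprod := hasSum_zeta_mul_zeta h₁ h₂
  rw [← hprod.tsum_eq, hprod.summable.tsum_eq_tsum_lt_add_tsum_lt_swap_add_tsum_diag,
    dzeta_eq_tsum_lt, dzeta_eq_tsum_lt, zeta]
  congr 2
  · exact tsum_congr fun p => mul_comm _ _
  · funext n
    rw [pow_add, one_div_mul_one_div]
end

section
/- The multiple harmonic sums, viewed as arithmetic functions, are linearly independent over ℚ: the family of functions H_s : ℕ → ℚ, indexed by all compositions s of positive integers together with the empty composition (whose harmonic sum is the constant function 1), is ℚ-linearly independent in the space of functions from ℕ to ℚ. -/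
/-!
We prove more: if `∑ₜ cₜ(n) H_t(n) = 0` for all large `n`, where `cₜ ∈ ℚ[X]` and `t` runs over
finitely many compositions, then every `cₜ` is zero. Induct on the maximal depth `L` and, for
fixed `L`, on the number of compositions `t` of depth `L` with `cₜ ≠ 0`. Pick such a `t₀` and put
`A = c_{t₀}`. Subtracting `A(n + 1)` times the relation at `n` from `A(n)` times the relation at
`n + 1`, and expanding `H_t(n + 1) = H_t(n) + H_{tail t}(n) / (n + 1)^{head t}`, gives a new
relation in which `t₀` has coefficient zero and every other coefficient of depth `L` is
`A·cₜ(X + 1) - A(X + 1)·cₜ`. By induction the new relation is trivial. Hence each coefficient of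
depth `L` is a constant multiple `kₜ·A`, and the coefficient of `u₀ = tail t₀` says that
`f = c_{u₀} / A` satisfies `f(X + 1) - f(X) = -∑ₛ k_{s :: u₀} / (X + 1)^s`. The difference of a
rational function cannot have `-1` as its only pole: tracking the poles of `f` along integer
translates shows that `f` has no pole at `0` or `-1`. So all `k_{s :: u₀}` vanish, in particular
`k_{t₀} = 0`, a contradiction.
-/

/-- The multiple harmonic sum `H_{s_1,…,s_r}(n) = Σ_{n ≥ n_1 > … > n_r > 0}
1/(n_1^{s_1}⋯n_r^{s_r}) ∈ ℚ`, indexed by a list `(s_1,…,s_r)` (the empty list gives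
the constant function `1`), defined by the equivalent nested recursion
`H_{s::t}(n) = Σ_{m=1}^{n} (1/m^s)·H_t(m-1)`. -/
def H : List ℕ → ℕ → ℚ
  | [], _ => 1
  | s :: t, n => ∑ m ∈ Finset.Icc 1 n, (1 / (m : ℚ) ^ s) * H t (m - 1)

open Polynomial Filter Finsupp

namespace Polynomial

section Domain

variable {R : Type*} [CommRing R] [IsDomain R] {p q r : R[X]} {S : ℕ}

theorem eq_zero_of_eval_eq_zero_of_injective {f : ℕ → R} (hf : f.Injective)
    (h : ∀ n, p.eval (f n) = 0) : p = 0 :=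
  p.eq_zero_of_infinite_isRoot (Set.infinite_of_injective_forall_mem hf h)

theorem isRoot_add_one_iff_of_isCoprime (hpq : IsCoprime p q)
    (h : (X + 1) ^ S * (taylor 1 p * q - p * taylor 1 q) = r * (q * taylor 1 q))
    {x : R} (hx : x + 1 ≠ 0) : q.IsRoot (x + 1) ↔ q.IsRoot x := by
  have hroot : ∀ y, q.IsRoot y → p.eval y ≠ 0 := fun y hqy hpy => by
    obtain ⟨a, b, hab⟩ := hpq
    simpa [hpy, hqy.eq_zero] using congrArg (eval y) hab
  have hx' := congrArg (eval x) h
  simp only [eval_mul, eval_pow, eval_add, eval_X, eval_one, eval_sub, taylor_eval] at hx'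
  constructor
  · intro hq1
    rw [hq1.eq_zero] at hx'
    simpa [hx, hroot _ hq1] using hx'
  · intro hq0
    rw [hq0.eq_zero] at hx'
    simpa [hx, hroot _ hq0] using hx'

variable [CharZero R]

theorem eq_zero_of_frequently_eval_natCast_eq_zero
    (h : ∃ᶠ n : ℕ in atTop, p.eval (n : R) = 0) : p = 0 := by
  refine p.eq_zero_of_infinite_isRoot
    (Set.Infinite.mono ?_ ((Nat.frequently_atTop_iff_infinite.1 h).image Nat.cast_injective.injOn))
  rintro _ ⟨n, hn, rfl⟩
  exact hn

theorem eventually_eval_natCast_ne_zero (hp : p ≠ 0) : ∀ᶠ n : ℕ in atTop, p.eval (n : R) ≠ 0 :=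
  not_frequently.1 fun h => hp (eq_zero_of_frequently_eval_natCast_eq_zero h)

/-- A root of `q` at `0` would spread to every natural number, one at `-1` to every negative
integer. -/
theorem eval_ne_zero_of_isCoprime (hpq : IsCoprime p q) (hq : q ≠ 0)
    (h : (X + 1) ^ S * (taylor 1 p * q - p * taylor 1 q) = r * (q * taylor 1 q)) :
    q.eval 0 ≠ 0 ∧ q.eval (-1) ≠ 0 := by
  constructor
  · refine fun h0 => hq (eq_zero_of_eval_eq_zero_of_injective Nat.cast_injective fun n => ?_)
    induction n with
    | zero => simpa using h0
    | succ n ih =>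
      push_cast
      exact (isRoot_add_one_iff_of_isCoprime hpq h (Nat.cast_add_one_ne_zero n)).2 ih
  · refine fun h1 => hq (eq_zero_of_eval_eq_zero_of_injective (f := fun n : ℕ => -1 - (n : R))
      (fun m n hmn => by simpa using hmn) fun n => ?_)
    induction n with
    | zero => simpa using h1
    | succ n ih =>
      have hx : (-1 - ((n + 1 : ℕ) : R)) + 1 = -1 - n := by push_cast; ring
      refine (isRoot_add_one_iff_of_isCoprime hpq h ?_).1 (by rw [hx]; exact ih)
      rw [hx, ← neg_add', neg_ne_zero, add_comm]
      exact Nat.cast_add_one_ne_zero n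

end Domain

variable {K : Type*} [Field K] [CharZero K] {p q r : K[X]} {S : ℕ}

theorem exists_eq_C_mul_of_mul_taylor_eq (hq : q ≠ 0) (h : p * taylor 1 q = taylor 1 p * q) :
    ∃ c : K, p = C c * q := by
  obtain ⟨M, hM⟩ := eventually_atTop.1 (eventually_eval_natCast_ne_zero hq)
  set c := p.eval (M : K) / q.eval (M : K)
  refine ⟨c, sub_eq_zero.1 (eq_zero_of_frequently_eval_natCast_eq_zero
    (Eventually.frequently (eventually_atTop.2 ⟨M, fun n hn => ?_⟩)))⟩
  induction n, hn using Nat.le_induction with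
  | base => simp [c, div_mul_cancel₀ _ (hM M le_rfl)]
  | succ n hn ih =>
    have hrel := congrArg (eval (n : K)) h
    simp only [eval_mul, taylor_eval, eval_sub, eval_C] at hrel ih ⊢
    push_cast
    apply mul_left_cancel₀ (hM n hn)
    linear_combination eval ((n : K) + 1) q * ih - hrel

theorem eq_zero_of_isCoprime (hpq : IsCoprime p q) (hq : q ≠ 0) (hr : r.degree < S)
    (h : (X + 1) ^ S * (taylor 1 p * q - p * taylor 1 q) = r * (q * taylor 1 q)) : r = 0 := by
  obtain ⟨h0, h1⟩ := eval_ne_zero_of_isCoprime hpq hq h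
  have hX : (X + 1 : K[X]) = X - C (-1) := by simp
  have hcop : IsCoprime (X - C (-1)) (q * taylor 1 q) :=
    (irreducible_X_sub_C _).coprime_iff_not_dvd.2 (by
      rw [dvd_iff_isRoot]
      simp [taylor_eval, h0, h1])
  have hdvd : (X - C (-1)) ^ S ∣ r * (q * taylor 1 q) := ⟨_, by rw [← hX, h]⟩
  refine eq_zero_of_dvd_of_degree_lt (hcop.pow_left.dvd_of_dvd_mul_right hdvd) ?_
  rwa [degree_pow, degree_X_sub_C, nsmul_one]

/-- With `f = p / q`, the hypothesis says `f (X + 1) - f X = r / (X + 1) ^ S`. -/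
theorem eq_zero_of_X_add_one_pow_mul_eq (hq : q ≠ 0) (hr : r.degree < S)
    (h : (X + 1) ^ S * (taylor 1 p * q - p * taylor 1 q) = r * (q * taylor 1 q)) : r = 0 := by
  classical
  set g := gcd p q
  have hg : g ≠ 0 := gcd_ne_zero_of_right hq
  set p' := p / g
  set q' := q / g
  have hp : p = g * p' := (EuclideanDomain.mul_div_cancel' hg (gcd_dvd_left p q)).symm
  have hq' : q = g * q' := (EuclideanDomain.mul_div_cancel' hg (gcd_dvd_right p q)).symm
  refine eq_zero_of_isCoprime (p := p') (q := q') (isCoprime_div_gcd_div_gcd hq)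
    (right_div_gcd_ne_zero hq) hr
    (mul_left_cancel₀ (mul_ne_zero hg ((taylor_eq_zero 1 g).not.2 hg)) ?_)
  rw [hp, hq', taylor_mul, taylor_mul] at h
  linear_combination h

end Polynomial

theorem H_cons_succ (s : ℕ) (t : List ℕ) (n : ℕ) :
    H (s :: t) (n + 1) = H (s :: t) n + H t n / ((n : ℚ) + 1) ^ s := by
  simp only [H]
  rw [Finset.sum_Icc_succ_top (by omega), Nat.add_sub_cancel]
  push_cast
  ring

namespace MultipleHarmonicSum

noncomputable section

def polyCombH (n : ℕ) : (List ℕ →₀ ℚ[X]) →+ ℚ :=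
  liftAddHom fun t => (AddMonoidHom.mulRight (H t n)).comp (evalRingHom (n : ℚ)).toAddMonoidHom

theorem polyCombH_apply (n : ℕ) (c : List ℕ →₀ ℚ[X]) :
    polyCombH n c = c.sum fun t p => p.eval (n : ℚ) * H t n :=
  liftAddHom_apply _ _

@[simp]
theorem polyCombH_single (n : ℕ) (t : List ℕ) (p : ℚ[X]) :
    polyCombH n (single t p) = p.eval (n : ℚ) * H t n :=
  liftAddHom_apply_single _ _ _

def IsPolyRelation (c : List ℕ →₀ ℚ[X]) : Prop :=
  ∀ᶠ n in atTop, polyCombH n c = 0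

def headWeight (S : ℕ) : List ℕ → ℚ[X]
  | [] => 0
  | s :: _ => (X + 1) ^ (S - s)

theorem eval_headWeight_mul_H_tail {S : ℕ} {t : List ℕ} (h : t.headI ≤ S) (n : ℕ) :
    (headWeight S t).eval (n : ℚ) * H t.tail n = ((n : ℚ) + 1) ^ S * (H t (n + 1) - H t n) := by
  cases t with
  | nil => simp [headWeight, H]
  | cons s u =>
    have hs : s ≤ S := h
    have hpow : ((n : ℚ) + 1) ^ S = ((n : ℚ) + 1) ^ (S - s) * ((n : ℚ) + 1) ^ s := by
      rw [← pow_add, Nat.sub_add_cancel hs]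
    simp only [headWeight, eval_pow, eval_add, eval_X, eval_one, List.tail_cons, H_cons_succ,
      add_sub_cancel_left, hpow]
    field_simp

theorem degree_headWeight_lt {S : ℕ} {t : List ℕ} (hpos : ∀ x ∈ t, 0 < x) (hS : t.headI ≤ S) :
    (headWeight S t).degree < S := by
  cases t with
  | nil => simp [headWeight]
  | cons s u =>
    have hs : 0 < s := hpos s List.mem_cons_self
    have hsS : s ≤ S := hS
    rw [headWeight, show (X + 1 : ℚ[X]) = X + C 1 by simp, degree_pow, degree_X_add_C, nsmul_one]
    exact_mod_cast (by omega : S - s < S)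

theorem eq_zero_of_sum_C_mul_headWeight_eq_zero {S : ℕ} {F : Finset (List ℕ)} {k : List ℕ → ℚ}
    {u : List ℕ} (hF : ∀ t ∈ F, t.tail = u ∧ t.headI ≤ S)
    (h : ∑ t ∈ F, C (k t) * headWeight S t = 0) {s : ℕ} (hs : s :: u ∈ F) : k (s :: u) = 0 := by
  classical
  have hsS : s ≤ S := (hF _ hs).2
  -- substituting `X - 1` for `X` turns the weights into the distinct monomials `X ^ (S - s)`
  have hcoeff : ∀ t ∈ F, (taylor (-1) (C (k t) * headWeight S t)).coeff (S - s) =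
      if t = s :: u then k t else 0 := by
    intro t ht
    cases t with
    | nil => simp [headWeight]
    | cons s' u' =>
      obtain ⟨rfl, hs'S⟩ : u' = u ∧ s' ≤ S := hF _ ht
      simp only [headWeight, taylor_mul, taylor_C, taylor_pow, map_add, taylor_X, taylor_one,
        List.cons.injEq, and_true]
      have : S - s = S - s' ↔ s' = s := by omega
      simp [this]
  have := congrArg (fun f => (taylor (-1) f).coeff (S - s)) h
  simp only [map_sum, finsetSum_coeff, map_zero, coeff_zero] at this
  rwa [Finset.sum_congr rfl hcoeff, Finset.sum_ite_eq', if_pos hs] at this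

/-- Clearing the denominators `(n + 1) ^ s` with `(n + 1) ^ S`, the second summand carries the
terms `H t.tail n / (n + 1) ^ t.headI` by which `H t (n + 1)` exceeds `H t n`. -/
def diffRel (A : ℚ[X]) (S : ℕ) (c : List ℕ →₀ ℚ[X]) : List ℕ →₀ ℚ[X] :=
  c.sum fun t p => single t ((X + 1) ^ S * (A * taylor 1 p - taylor 1 A * p)) +
    single t.tail (A * taylor 1 p * headWeight S t)

variable {A : ℚ[X]} {S : ℕ} {c : List ℕ →₀ ℚ[X]}

theorem polyCombH_diffRel (hS : ∀ t ∈ c.support, t.headI ≤ S) (n : ℕ) :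
    polyCombH n (diffRel A S c) = ((n : ℚ) + 1) ^ S *
      (A.eval (n : ℚ) * polyCombH (n + 1) c - A.eval ((n : ℚ) + 1) * polyCombH n c) := by
  rw [diffRel, map_finsuppSum, polyCombH_apply n c, polyCombH_apply (n + 1) c]
  simp only [Finsupp.sum, Finset.mul_sum, ← Finset.sum_sub_distrib]
  refine Finset.sum_congr rfl fun t ht => ?_
  have hw := eval_headWeight_mul_H_tail (hS t ht) n
  simp only [map_add, polyCombH_single, eval_mul, eval_sub, eval_pow, eval_add, eval_X, eval_one,
    taylor_eval, Nat.cast_add, Nat.cast_one]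
  linear_combination (eval (n : ℚ) A * eval ((n : ℚ) + 1) (c t)) * hw

theorem IsPolyRelation.diffRel (hc : IsPolyRelation c) (hS : ∀ t ∈ c.support, t.headI ≤ S) :
    IsPolyRelation (diffRel A S c) := by
  filter_upwards [hc, (tendsto_add_atTop_nat 1).eventually hc] with n h0 h1
  rw [polyCombH_diffRel hS, h0, h1]
  ring

theorem diffRel_apply (u : List ℕ) : diffRel A S c u =
    (X + 1) ^ S * (A * taylor 1 (c u) - taylor 1 A * c u) +
      c.sum fun t p => if t.tail = u then A * taylor 1 p * headWeight S t else 0 := by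
  classical
  rw [diffRel, Finsupp.sum_apply]
  simp only [Finsupp.add_apply, single_apply]
  rw [Finsupp.sum_add]
  congr 1
  rw [Finsupp.sum, Finset.sum_ite_eq']
  split_ifs with hu
  · rfl
  · simp [Finsupp.notMem_support_iff.1 hu]

theorem diffRel_apply_of_length {L : ℕ} (hlen : ∀ t ∈ c.support, t.length ≤ L + 1) {u : List ℕ}
    (hu : u.length = L + 1) :
    diffRel A S c u = (X + 1) ^ S * (A * taylor 1 (c u) - taylor 1 A * c u) := by
  rw [diffRel_apply, add_eq_left]
  refine Finset.sum_eq_zero fun t ht => if_neg fun htu => ?_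
  have := hlen t ht
  rw [← htu, List.length_tail] at hu
  omega

theorem exists_of_mem_support_diffRel {u : List ℕ} (hu : u ∈ (diffRel A S c).support) :
    ∃ t ∈ c.support, u = t ∨ u = t.tail := by
  classical
  obtain ⟨t, ht, hu⟩ := Finset.mem_biUnion.1 (support_sum hu)
  rcases Finset.mem_union.1 (support_add hu) with hu | hu
  · exact ⟨t, ht, .inl (Finset.mem_singleton.1 (support_single_subset hu))⟩
  · exact ⟨t, ht, .inr (Finset.mem_singleton.1 (support_single_subset hu))⟩

theorem card_filter_length_diffRel_lt {L : ℕ} {t₀ : List ℕ}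
    (hlen : ∀ t ∈ c.support, t.length ≤ L + 1) (ht₀ : t₀ ∈ c.support) (ht₀len : t₀.length = L + 1) :
    ((diffRel (c t₀) S c).support.filter (·.length = L + 1)).card <
      (c.support.filter (·.length = L + 1)).card := by
  classical
  refine (Finset.card_le_card fun u hu => ?_).trans_lt
    (Finset.card_erase_lt_of_mem (Finset.mem_filter.2 ⟨ht₀, ht₀len⟩))
  obtain ⟨hud, hulen⟩ := Finset.mem_filter.1 hu
  rw [Finsupp.mem_support_iff, diffRel_apply_of_length hlen hulen] at hud
  refine Finset.mem_erase.2 ⟨?_, Finset.mem_filter.2 ⟨Finsupp.mem_support_iff.2 ?_, hulen⟩⟩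
  · rintro rfl
    exact hud (by ring)
  · intro hu0
    exact hud (by simp [hu0])

theorem coeff_eq_zero_of_diffRel_eq_zero {L : ℕ} {t₀ : List ℕ}
    (hpos : ∀ t ∈ c.support, ∀ x ∈ t, 0 < x) (hlen : ∀ t ∈ c.support, t.length ≤ L + 1)
    (hS : ∀ t ∈ c.support, t.headI ≤ S) (ht₀ : t₀.length = L + 1)
    (h : diffRel (c t₀) S c = 0) : c t₀ = 0 := by
  set A := c t₀
  by_contra hA
  have hprop : ∀ t ∈ c.support, t.length = L + 1 → ∃ k : ℚ, c t = C k * A := by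
    intro t _ htlen
    have h0 := DFunLike.congr_fun h t
    rw [diffRel_apply_of_length hlen htlen, Finsupp.zero_apply, mul_eq_zero,
      or_iff_right (pow_ne_zero _ (by simpa using X_add_C_ne_zero (1 : ℚ))), sub_eq_zero] at h0
    exact exists_eq_C_mul_of_mul_taylor_eq hA (by linear_combination -h0)
  choose! k hk using hprop
  obtain ⟨s₀, u₀, ht₀_eq⟩ := List.exists_cons_of_length_eq_add_one ht₀
  have hu₀ : u₀.length = L := by simpa [ht₀_eq] using ht₀
  set F := c.support.filter (·.tail = u₀)
  have hF : ∀ t ∈ F, t.tail = u₀ ∧ t.headI ≤ S := fun t ht =>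
    ⟨(Finset.mem_filter.1 ht).2, hS t (Finset.mem_filter.1 ht).1⟩
  set r := ∑ t ∈ F, C (k t) * headWeight S t
  have htails : (c.sum fun t p => if t.tail = u₀ then A * taylor 1 p * headWeight S t else 0) =
      r * (A * taylor 1 A) := by
    rw [Finsupp.sum, ← Finset.sum_filter, Finset.sum_mul]
    refine Finset.sum_congr rfl fun t ht => ?_
    obtain ⟨htc, htail⟩ := Finset.mem_filter.1 ht
    cases t with
    | nil => simp [headWeight]
    | cons s u =>
      rw [hk _ htc (by simp [← hu₀, ← htail]), taylor_mul, taylor_C]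
      ring
  have hr : r = 0 := by
    have h0 := DFunLike.congr_fun h u₀
    rw [diffRel_apply, htails, Finsupp.zero_apply] at h0
    refine neg_eq_zero.1
      (eq_zero_of_X_add_one_pow_mul_eq (p := c u₀) hA ?_ (by linear_combination h0))
    rw [degree_neg]
    refine (degree_sum_le _ _).trans_lt ((Finset.sup_lt_iff (WithBot.bot_lt_coe S)).2 ?_)
    intro t ht
    rw [← smul_eq_C_mul]
    exact (degree_smul_le _ _).trans_lt
      (degree_headWeight_lt (hpos t (Finset.mem_filter.1 ht).1) (hF t ht).2)
  have ht₀c : t₀ ∈ c.support := Finsupp.mem_support_iff.2 hA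
  have hk₀ := eq_zero_of_sum_C_mul_headWeight_eq_zero hF hr
    (Finset.mem_filter.2 ⟨ht₀_eq ▸ ht₀c, rfl⟩)
  rw [← ht₀_eq] at hk₀
  have hA₀ := hk t₀ ht₀c ht₀
  rw [hk₀, C_0, zero_mul] at hA₀
  exact hA hA₀

theorem eq_zero_of_length_le_zero (hlen : ∀ t ∈ c.support, t.length ≤ 0)
    (hc : IsPolyRelation c) : c = 0 := by
  obtain ⟨p, rfl⟩ := support_subset_singleton'.1 fun t ht => by
    simpa using List.length_eq_zero_iff.1 (Nat.le_zero.1 (hlen t ht))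
  have hp : p = 0 := eq_zero_of_frequently_eval_natCast_eq_zero <| hc.frequently.mono fun n hn => by
    simpa [H] using hn
  rw [hp, single_zero]

theorem eq_zero_of_length_le_succ {L : ℕ}
    (ih : ∀ c : List ℕ →₀ ℚ[X], (∀ t ∈ c.support, ∀ x ∈ t, 0 < x) →
      (∀ t ∈ c.support, t.length ≤ L) → IsPolyRelation c → c = 0)
    (m : ℕ) : ∀ c : List ℕ →₀ ℚ[X], (∀ t ∈ c.support, ∀ x ∈ t, 0 < x) →
      (∀ t ∈ c.support, t.length ≤ L + 1) → (c.support.filter (·.length = L + 1)).card ≤ m →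
      IsPolyRelation c → c = 0 := by
  induction m using Nat.strong_induction_on with
  | _ m ihm =>
  intro c hpos hlen hcard hc
  rcases Finset.eq_empty_or_nonempty (c.support.filter (·.length = L + 1)) with hempty | ⟨t₀, ht₀⟩
  · refine ih c hpos (fun t ht => ?_) hc
    have := hlen t ht
    have := Finset.filter_eq_empty_iff.1 hempty ht
    omega
  obtain ⟨ht₀c, ht₀len⟩ := Finset.mem_filter.1 ht₀
  set S := c.support.sup List.headI
  have hS : ∀ t ∈ c.support, t.headI ≤ S := fun t ht => Finset.le_sup ht
  have hd : diffRel (c t₀) S c = 0 :=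
    ihm _ ((card_filter_length_diffRel_lt hlen ht₀c ht₀len).trans_le hcard) _
      (fun u hu => by
        obtain ⟨t, ht, hu | hu⟩ := exists_of_mem_support_diffRel hu <;> rw [hu]
        exacts [hpos t ht, fun x hx => hpos t ht x (List.mem_of_mem_tail hx)])
      (fun u hu => by
        obtain ⟨t, ht, hu | hu⟩ := exists_of_mem_support_diffRel hu <;> rw [hu]
        · exact hlen t ht
        · rw [List.length_tail]
          exact (Nat.sub_le _ _).trans (hlen t ht))
      le_rfl (hc.diffRel hS)
  exact absurd (coeff_eq_zero_of_diffRel_eq_zero hpos hlen hS ht₀len hd)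
    (Finsupp.mem_support_iff.1 ht₀c)

theorem eq_zero_of_length_le (L : ℕ) : ∀ c : List ℕ →₀ ℚ[X], (∀ t ∈ c.support, ∀ x ∈ t, 0 < x) →
    (∀ t ∈ c.support, t.length ≤ L) → IsPolyRelation c → c = 0 := by
  induction L with
  | zero => exact fun c _ hlen hc => eq_zero_of_length_le_zero hlen hc
  | succ L ih => exact fun c hpos hlen => eq_zero_of_length_le_succ ih _ c hpos hlen le_rfl

theorem IsPolyRelation.eq_zero (hpos : ∀ t ∈ c.support, ∀ x ∈ t, 0 < x) (hc : IsPolyRelation c) :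
    c = 0 :=
  eq_zero_of_length_le _ c hpos (fun _ ht => Finset.le_sup ht) hc

end

end MultipleHarmonicSum

/-- the multiple harmonic sums, viewed as arithmetic functions `ℕ → ℚ`
indexed by all compositions of positive integers together with the empty composition,
form a ℚ-linearly independent family in the space of functions `ℕ → ℚ`. -/
theorem harmonic_sums_linearIndependent :
    LinearIndependent ℚ
      (fun l : {l : List ℕ // ∀ x ∈ l, 0 < x} => (fun n : ℕ => H l.1 n)) := by
  rw [linearIndependent_iff]
  intro l hl
  set c : List ℕ →₀ ℚ[X] := (l.embDomain (Function.Embedding.subtype _)).mapRange C C_0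
  have hc : c = 0 := by
    refine MultipleHarmonicSum.IsPolyRelation.eq_zero (fun t ht => ?_)
      (Eventually.of_forall fun n => ?_)
    · have ht' : t ∈ (l.embDomain (Function.Embedding.subtype _)).support := support_mapRange ht
      rw [support_embDomain] at ht'
      obtain ⟨i, -, rfl⟩ := Finset.mem_map.1 ht'
      exact i.2
    · have := congrFun hl n
      simp only [linearCombination_apply, Finsupp.sum, Finset.sum_apply, Pi.smul_apply, smul_eq_mul,
        Pi.zero_apply] at this
      rw [MultipleHarmonicSum.polyCombH_apply, sum_mapRange_index (by simp), sum_embDomain]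
      simpa [Finsupp.sum] using this
  ext i
  have hi := DFunLike.congr_fun hc (Function.Embedding.subtype _ i)
  rw [mapRange_apply, embDomain_apply_self] at hi
  simpa using hi
end

section
/- ζ(3,1) = (1/10)·ζ(2)², i.e. Σ_{m>n>0} 1/(m³·n) = (1/10)·(Σ_{n≥1} 1/n²)². -/
/-!
Since `1 / (m²n²) = 1 / (m²n(m+n)) + 1 / (n²m(m+n))`, symmetry gives
`ζ(2)² = 2 Σ_{m,n ≥ 1} 1 / (m²n(m+n))`. Telescoping `1 / (n(n+m)) = (1/n - 1/(n+m)) / m` sums the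
inner series to `H_m / m`, so `ζ(2)² = 2 Σ_m H_m / m³ = 2 ζ(4) + 2 ζ(3,1)`. With `ζ(2) = π²/6` and
`ζ(4) = π⁴/90` this gives `ζ(3,1) = π⁴/360 = ζ(2)² / 10`.
-/

open Finset Filter Topology Real

theorem Antitone.hasSum_sub_nat_add {u : ℕ → ℝ} (hu : Antitone u)
    (hu0 : Tendsto u atTop (𝓝 0)) (n : ℕ) :
    HasSum (fun m ↦ u m - u (m + n)) (∑ j ∈ range n, u j) := by
  rw [hasSum_iff_tendsto_nat_of_nonneg fun m ↦ sub_nonneg.2 (hu (m.le_add_right n))]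
  have partial_sum (M : ℕ) : ∑ m ∈ range M, (u m - u (m + n)) =
      ∑ j ∈ range n, u j - ∑ j ∈ range n, u (M + j) := by
    have h₁ := sum_range_add u M n
    have h₂ : ∑ m ∈ range (M + n), u m = ∑ j ∈ range n, u j + ∑ m ∈ range M, u (m + n) := by
      rw [add_comm M, sum_range_add]
      simp only [add_comm n]
    rw [sum_sub_distrib]
    linarith
  have tail : Tendsto (fun M ↦ ∑ j ∈ range n, u (M + j)) atTop (𝓝 0) := by
    simpa using tendsto_finsetSum (range n) fun j _ ↦ hu0.comp (tendsto_add_atTop_nat j)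
  simpa [partial_sum] using tendsto_const_nhds.sub tail

theorem zeta_eq_of_hasSum {k : ℕ} (hk : k ≠ 0) {a : ℝ}
    (h : HasSum (fun n : ℕ ↦ 1 / (n : ℝ) ^ k) a) : zeta k = a := by
  rw [← hasSum_nat_add_iff' 1] at h
  simpa [zeta, zero_pow hk] using h.tsum_eq

theorem zeta_two : zeta 2 = π ^ 2 / 6 := zeta_eq_of_hasSum two_ne_zero hasSum_zeta_two

-- With `1 / 0 = 0`, summands with a zero index vanish: `∑ j ∈ range (n + 1), 1 / j` is the
-- harmonic number `H_n`, and the sums over `ℕ` below are sums over the positive integers.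
theorem hasSum_one_div_mul_add {n : ℕ} (hn : n ≠ 0) :
    HasSum (fun m : ℕ ↦ 1 / ((m : ℝ) * (m + n))) ((∑ j ∈ range (n + 1), 1 / (j : ℝ)) / n) := by
  have hu : Antitone fun m : ℕ ↦ 1 / ((m : ℝ) + 1) := fun a b hab ↦
    one_div_le_one_div_of_le (by positivity) (by gcongr)
  have tele := (hu.hasSum_sub_nat_add tendsto_one_div_add_atTop_nhds_zero_nat n).div_const n
  rw [← hasSum_nat_add_iff' 1, sum_range_one, sum_range_succ']
  simp only [Nat.cast_zero, Nat.cast_add, Nat.cast_one, zero_mul, div_zero, add_zero, sub_zero]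
  refine tele.congr_fun fun m ↦ ?_
  push_cast
  field_simp
  ring

noncomputable def eulerTerm (p : ℕ × ℕ) : ℝ := 1 / ((p.1 : ℝ) ^ 2 * p.2 * (p.1 + p.2))

theorem eulerTerm_nonneg (p : ℕ × ℕ) : 0 ≤ eulerTerm p := by
  unfold eulerTerm
  positivity

theorem one_div_sq_mul_sq_eq_eulerTerm_add (p : ℕ × ℕ) :
    1 / ((p.1 : ℝ) ^ 2 * (p.2 : ℝ) ^ 2) = eulerTerm p + eulerTerm p.swap := by
  obtain ⟨m, n⟩ := p
  rcases eq_or_ne m 0 with rfl | hm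
  · simp [eulerTerm]
  rcases eq_or_ne n 0 with rfl | hn
  · simp [eulerTerm]
  simp only [eulerTerm, Prod.swap]
  field_simp
  ring

theorem hasSum_one_div_sq_mul_sq :
    HasSum (fun p : ℕ × ℕ ↦ 1 / ((p.1 : ℝ) ^ 2 * (p.2 : ℝ) ^ 2)) ((π ^ 2 / 6) ^ 2) := by
  have hs := hasSum_zeta_two.summable
  have hprod := hasSum_zeta_two.mul hasSum_zeta_two
    (hs.mul_of_nonneg hs (fun _ ↦ by positivity) fun _ ↦ by positivity)
  simpa only [one_div_mul_one_div, ← sq] using hprod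

theorem hasSum_eulerTerm : HasSum eulerTerm ((π ^ 2 / 6) ^ 2 / 2) := by
  have hsummable : Summable eulerTerm :=
    hasSum_one_div_sq_mul_sq.summable.of_nonneg_of_le eulerTerm_nonneg fun p ↦ by
      rw [one_div_sq_mul_sq_eq_eulerTerm_add]
      linarith [eulerTerm_nonneg p.swap]
  obtain ⟨s, hs⟩ := hsummable
  have hsym : HasSum (fun p ↦ eulerTerm p + eulerTerm p.swap) (s + s) :=
    hs.add ((Equiv.prodComm ℕ ℕ).hasSum_iff.2 hs)
  simp only [← one_div_sq_mul_sq_eq_eulerTerm_add] at hsym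
  have := hsym.unique hasSum_one_div_sq_mul_sq
  convert hs using 1
  linarith

theorem hasSum_eulerTerm_fiber (n : ℕ) :
    HasSum (fun m ↦ eulerTerm (n, m)) (1 / (n : ℝ) ^ 4 + ∑ j ∈ range n, 1 / ((n : ℝ) ^ 3 * j)) := by
  rcases eq_or_ne n 0 with rfl | hn
  · simp [eulerTerm, hasSum_zero]
  have hsplit (j : ℕ) : 1 / ((n : ℝ) ^ 3 * j) = 1 / (n : ℝ) ^ 3 * (1 / j) :=
    (one_div_mul_one_div _ _).symm
  have hval : 1 / (n : ℝ) ^ 4 + ∑ j ∈ range n, 1 / ((n : ℝ) ^ 3 * j) =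
      1 / (n : ℝ) ^ 2 * ((∑ j ∈ range (n + 1), 1 / (j : ℝ)) / n) := by
    simp only [hsplit, ← mul_sum, sum_range_succ]
    field_simp
    ring
  rw [hval]
  refine ((hasSum_one_div_mul_add hn).mul_left _).congr_fun fun m ↦ ?_
  rw [eulerTerm, one_div_mul_one_div]
  ring_nf

theorem one_div_pow_three_mul_le {n j : ℕ} (hjn : j ≤ n) :
    1 / ((n : ℝ) ^ 3 * j) ≤ 1 / ((n : ℝ) ^ 2 * (j : ℝ) ^ 2) := by
  rcases eq_or_ne j 0 with rfl | hj
  · simp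
  have hj0 : (0 : ℝ) < j := by exact_mod_cast Nat.pos_of_ne_zero hj
  have hjn' : (j : ℝ) ≤ n := by exact_mod_cast hjn
  refine one_div_le_one_div_of_le (by have := hj0.trans_le hjn'; positivity) ?_
  calc (n : ℝ) ^ 2 * (j : ℝ) ^ 2 = (n : ℝ) ^ 2 * j * j := by ring
    _ ≤ (n : ℝ) ^ 2 * j * n := by gcongr
    _ = (n : ℝ) ^ 3 * j := by ring

theorem hasSum_dzeta_three_one :
    HasSum (fun n : ℕ ↦ ∑ j ∈ range n, 1 / ((n : ℝ) ^ 3 * j)) (dzeta 3 1) := by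
  set S : Set (ℕ × ℕ) := {p | p.2 < p.1 ∧ 0 < p.2}
  set F : ℕ × ℕ → ℝ := fun p ↦ 1 / ((p.1 : ℝ) ^ 3 * (p.2 : ℝ) ^ 1)
  have hF (p : ℕ × ℕ) : S.indicator F p = if p.2 < p.1 then 1 / ((p.1 : ℝ) ^ 3 * p.2) else 0 := by
    obtain ⟨n, j⟩ := p
    rcases eq_or_ne j 0 with rfl | hj <;> simp [S, F, Set.indicator, Nat.pos_iff_ne_zero, *]
  have hle (p : ℕ × ℕ) : S.indicator F p ≤ 1 / ((p.1 : ℝ) ^ 2 * (p.2 : ℝ) ^ 2) := by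
    rw [hF]
    split_ifs with hlt
    · exact one_div_pow_three_mul_le hlt.le
    · positivity
  have hsum : Summable (S.indicator F) :=
    hasSum_one_div_sq_mul_sq.summable.of_nonneg_of_le
      (Set.indicator_nonneg fun p _ ↦ by positivity) hle
  have hd : HasSum (S.indicator F) (dzeta 3 1) :=
    hasSum_subtype_iff_indicator.1 (summable_subtype_iff_indicator.2 hsum).hasSum
  refine hd.prod_fiberwise fun n ↦ ?_
  rw [← sum_congr rfl fun j hj ↦ (hF (n, j)).trans (if_pos (mem_range.1 hj))]
  exact hasSum_sum_of_ne_finset_zero fun j hj ↦ (hF (n, j)).trans (if_neg (by simpa using hj))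

/-- `ζ(3,1) = (1/10)·ζ(2)²`, i.e.
`Σ_{m>n>0} 1/(m³·n) = (1/10)·(Σ_{n≥1} 1/n²)²`. -/
theorem zeta_three_one_eq : dzeta 3 1 = (1 / 10) * zeta 2 ^ 2 := by
  have h := (hasSum_eulerTerm.prod_fiberwise hasSum_eulerTerm_fiber).unique
    (hasSum_zeta_four.add hasSum_dzeta_three_one)
  rw [zeta_two]
  linear_combination -h
end
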